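/- arXiv:2407.11821 — 5 statements merged into one kernel-verified Lean document; each statement's English description precedes it below -/
import Mathlib

section
/- Let Δ be a finite type, let C, D, E be finite subsets (Finsets) of Δ, and let l₁, u₁, l₂, u₂ be real numbers in [0,1]. Assume l₁ · |C| ≤ |D ∩ C| ≤ u₁ · |C| and l₂ · |C ∩ D| ≤ |E ∩ C ∩ D| ≤ u₂ · |C ∩ D| (cardinalities viewed as real numbers). Then (l₁ · l₂) · |C| ≤ |E ∩ C| ≤ min(1, u₁ · u₂ + 1 − l₁) · |C|. -/
theorem stmt_2 {Δ : Type*} [Fintype Δ] [DecidableEq Δ] (C D E : Finset Δ)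
    (l₁ u₁ l₂ u₂ : ℝ)
    (hl₁ : 0 ≤ l₁) (hl₁' : l₁ ≤ 1) (hu₁ : 0 ≤ u₁) (hu₁' : u₁ ≤ 1)
    (hl₂ : 0 ≤ l₂) (hl₂' : l₂ ≤ 1) (hu₂ : 0 ≤ u₂) (hu₂' : u₂ ≤ 1)
    (h1l : l₁ * (C.card : ℝ) ≤ ((D ∩ C).card : ℝ))
    (h1u : ((D ∩ C).card : ℝ) ≤ u₁ * (C.card : ℝ))
    (h2l : l₂ * ((C ∩ D).card : ℝ) ≤ ((E ∩ C ∩ D).card : ℝ))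
    (h2u : ((E ∩ C ∩ D).card : ℝ) ≤ u₂ * ((C ∩ D).card : ℝ)) :
    (l₁ * l₂) * (C.card : ℝ) ≤ ((E ∩ C).card : ℝ) ∧
    ((E ∩ C).card : ℝ) ≤ min 1 (u₁ * u₂ + 1 - l₁) * (C.card : ℝ) := by
  have hCD : (C ∩ D) = (D ∩ C) := Finset.inter_comm C D
  have hsub : ((E ∩ C ∩ D).card : ℝ) ≤ ((E ∩ C).card : ℝ) := by
    exact_mod_cast Finset.card_le_card (Finset.inter_subset_left)
  have hsplit : ((E ∩ C ∩ D).card : ℝ) + (((E ∩ C) \ D).card : ℝ) = ((E ∩ C).card : ℝ) := by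
    exact_mod_cast Finset.card_inter_add_card_sdiff (E ∩ C) D
  have hCsplit : ((C ∩ D).card : ℝ) + ((C \ D).card : ℝ) = (C.card : ℝ) := by
    exact_mod_cast Finset.card_inter_add_card_sdiff C D
  have hsd : (((E ∩ C) \ D).card : ℝ) ≤ ((C \ D).card : ℝ) := by
    exact_mod_cast Finset.card_le_card (Finset.sdiff_subset_sdiff
      (Finset.inter_subset_right) (le_refl D))
  have hEC_le : ((E ∩ C).card : ℝ) ≤ (C.card : ℝ) := by
    exact_mod_cast Finset.card_le_card (Finset.inter_subset_right)
  have hC0 : (0:ℝ) ≤ (C.card : ℝ) := Nat.cast_nonneg _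
  rw [hCD] at h2l h2u hCsplit
  constructor
  · calc (l₁ * l₂) * (C.card : ℝ) = l₂ * (l₁ * (C.card : ℝ)) := by ring
      _ ≤ l₂ * ((D ∩ C).card : ℝ) := by nlinarith
      _ ≤ ((E ∩ C ∩ D).card : ℝ) := h2l
      _ ≤ ((E ∩ C).card : ℝ) := hsub
  · rw [min_def]
    split_ifs with h
    · nlinarith
    · have : u₂ * ((D ∩ C).card : ℝ) ≤ u₂ * (u₁ * (C.card : ℝ)) := by nlinarith
      nlinarith
end

section
/- Let (Ω, 𝒜, μ) be a measure space, let C, D, E ⊆ Ω be measurable sets with μ(C) < ∞, and for a measurable set S ⊆ C write m(S) = (μ(S)).toReal. Let l₁, u₁, l₂, u₂ be real numbers in [0,1]. Assume l₁ · m(C) ≤ m(D ∩ C) ≤ u₁ · m(C) and l₂ · m(C ∩ D) ≤ m(E ∩ C ∩ D) ≤ u₂ · m(C ∩ D). Then (l₁ · l₂) · m(C) ≤ m(E ∩ C) ≤ min(1, u₁ · u₂ + 1 − l₁) · m(C). -/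
open MeasureTheory

theorem stmt_3 {Ω : Type*} [MeasurableSpace Ω] (μ : Measure Ω)
    (C D E : Set Ω) (hC : MeasurableSet C) (hD : MeasurableSet D)
    (hE : MeasurableSet E) (hCfin : μ C < ⊤)
    (l₁ u₁ l₂ u₂ : ℝ)
    (hl₁ : 0 ≤ l₁) (hl₁' : l₁ ≤ 1) (hu₁ : 0 ≤ u₁) (hu₁' : u₁ ≤ 1)
    (hl₂ : 0 ≤ l₂) (hl₂' : l₂ ≤ 1) (hu₂ : 0 ≤ u₂) (hu₂' : u₂ ≤ 1)
    (h1l : l₁ * (μ C).toReal ≤ (μ (D ∩ C)).toReal)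
    (h1u : (μ (D ∩ C)).toReal ≤ u₁ * (μ C).toReal)
    (h2l : l₂ * (μ (C ∩ D)).toReal ≤ (μ (E ∩ C ∩ D)).toReal)
    (h2u : (μ (E ∩ C ∩ D)).toReal ≤ u₂ * (μ (C ∩ D)).toReal) :
    (l₁ * l₂) * (μ C).toReal ≤ (μ (E ∩ C)).toReal ∧
    (μ (E ∩ C)).toReal ≤ min 1 (u₁ * u₂ + 1 - l₁) * (μ C).toReal := by
  have hCne : μ C ≠ ⊤ := hCfin.ne
  have hECne : μ (E ∩ C) ≠ ⊤ :=
    ((measure_mono Set.inter_subset_right).trans_lt hCfin).ne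
  have hCDne : μ (C ∩ D) ≠ ⊤ :=
    ((measure_mono Set.inter_subset_left).trans_lt hCfin).ne
  have hcomm : μ (D ∩ C) = μ (C ∩ D) := by rw [Set.inter_comm]
  have hmono1 : (μ (E ∩ C ∩ D)).toReal ≤ (μ (E ∩ C)).toReal :=
    ENNReal.toReal_mono hECne (measure_mono Set.inter_subset_left)
  have hmC : 0 ≤ (μ C).toReal := ENNReal.toReal_nonneg
  -- split E ∩ C along D
  have hsplit : μ (E ∩ C ∩ D) + μ ((E ∩ C) \ D) = μ (E ∩ C) :=
    measure_inter_add_diff (E ∩ C) hD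
  have hdiff1 : μ ((E ∩ C) \ D) ≤ μ (C \ D) :=
    measure_mono (Set.diff_subset_diff_left Set.inter_subset_right)
  have hCdiff : μ (C \ D) = μ C - μ (C ∩ D) := by
    have : C \ D = C \ (C ∩ D) := by
      ext x; simp [Set.mem_diff]
    rw [this, measure_diff Set.inter_subset_left (hC.inter hD).nullMeasurableSet hCDne]
  have hCdiffR : (μ (C \ D)).toReal = (μ C).toReal - (μ (C ∩ D)).toReal := by
    rw [hCdiff, ENNReal.toReal_sub_of_le (measure_mono Set.inter_subset_left) hCne]
  have hsplitR : (μ (E ∩ C)).toReal = (μ (E ∩ C ∩ D)).toReal + (μ ((E ∩ C) \ D)).toReal := by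
    rw [← hsplit, ENNReal.toReal_add
      ((measure_mono Set.inter_subset_left).trans_lt
        ((measure_mono Set.inter_subset_right).trans_lt hCfin)).ne
      (((measure_mono Set.diff_subset).trans_lt
        ((measure_mono Set.inter_subset_right).trans_lt hCfin)).ne)]
  have hdiff1R : (μ ((E ∩ C) \ D)).toReal ≤ (μ C).toReal - (μ (C ∩ D)).toReal := by
    rw [← hCdiffR]
    exact ENNReal.toReal_mono (((measure_mono Set.diff_subset).trans_lt hCfin).ne) hdiff1
  rw [hcomm] at h1l h1u
  constructor
  · calc l₁ * l₂ * (μ C).toReal = l₂ * (l₁ * (μ C).toReal) := by ring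
      _ ≤ l₂ * (μ (C ∩ D)).toReal := by
          exact mul_le_mul_of_nonneg_left h1l hl₂
      _ ≤ (μ (E ∩ C ∩ D)).toReal := h2l
      _ ≤ (μ (E ∩ C)).toReal := hmono1
  · have hb1 : (μ (E ∩ C)).toReal ≤ 1 * (μ C).toReal := by
      rw [one_mul]
      exact ENNReal.toReal_mono hCne (measure_mono Set.inter_subset_right)
    have hb2 : (μ (E ∩ C)).toReal ≤ (u₁ * u₂ + 1 - l₁) * (μ C).toReal := by
      have h3 : u₂ * (μ (C ∩ D)).toReal ≤ u₂ * (u₁ * (μ C).toReal) :=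
        mul_le_mul_of_nonneg_left h1u hu₂
      nlinarith [hsplitR, hdiff1R, h2u]
    rw [min_mul_of_nonneg _ _ hmC]
    exact le_min hb1 hb2
end

section
/- Let n be a natural number, let m₁, M₁, m₂, M₂ ∈ ℝⁿ (viewed as Fin n → ℝ), write B₁ = Icc m₁ M₁ and B₂ = Icc m₂ M₂, and let Vol(S) denote the Lebesgue measure of S ⊆ ℝⁿ as a real number. If Vol(B₁) > 0 and Vol(B₁ ∩ B₂) = Vol(B₁), then B₁ ⊆ B₂. -/
open MeasureTheory

theorem stmt_9 (n : ℕ) (m₁ M₁ m₂ M₂ : Fin n → ℝ)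
    (hpos : 0 < (volume (Set.Icc m₁ M₁)).toReal)
    (heq : (volume (Set.Icc m₁ M₁ ∩ Set.Icc m₂ M₂)).toReal
      = (volume (Set.Icc m₁ M₁)).toReal) :
    Set.Icc m₁ M₁ ⊆ Set.Icc m₂ M₂ := by
  have hfin : volume (Set.Icc m₁ M₁) ≠ ⊤ := (isCompact_Icc.measure_lt_top).ne
  have hfin' : volume (Set.Icc m₁ M₁ ∩ Set.Icc m₂ M₂) ≠ ⊤ :=
    ne_top_of_le_ne_top hfin (measure_mono Set.inter_subset_left)
  have hmeq : volume (Set.Icc m₁ M₁ ∩ Set.Icc m₂ M₂) = volume (Set.Icc m₁ M₁) :=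
    (ENNReal.toReal_eq_toReal_iff' hfin' hfin).mp heq
  have hdiff : volume (Set.Icc m₁ M₁ \ Set.Icc m₂ M₂) = 0 := by
    have h := measure_diff (μ := volume) (Set.inter_subset_left :
        Set.Icc m₁ M₁ ∩ Set.Icc m₂ M₂ ⊆ Set.Icc m₁ M₁)
      (measurableSet_Icc.inter measurableSet_Icc).nullMeasurableSet hfin'
    rw [hmeq, tsub_self _] at h
    have hsub : Set.Icc m₁ M₁ \ Set.Icc m₂ M₂
        ⊆ Set.Icc m₁ M₁ \ (Set.Icc m₁ M₁ ∩ Set.Icc m₂ M₂) := by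
      intro y hy; exact ⟨hy.1, fun hc => hy.2 hc.2⟩
    exact measure_mono_null hsub h
  -- positivity of side lengths
  have hside : ∀ i, m₁ i < M₁ i := by
    intro i
    by_contra hle
    push_neg at hle
    have : volume (Set.Icc m₁ M₁) = 0 := by
      rw [Real.volume_Icc_pi]
      exact Finset.prod_eq_zero (Finset.mem_univ i)
        (by simp [ENNReal.ofReal_eq_zero, sub_nonpos.mpr hle])
    rw [this] at hpos; simp at hpos
  intro x hx
  rw [Set.mem_Icc] at hx ⊢
  by_contra hxB
  rw [not_and_or] at hxB
  have key : ∀ (m M : Fin n → ℝ), (∀ i, m i < M i) →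
      Set.Icc m M ⊆ Set.Icc m₁ M₁ \ Set.Icc m₂ M₂ → False := by
    intro m M hmM hsub
    have h0 : volume (Set.Icc m M) ≠ 0 := by
      rw [Real.volume_Icc_pi]
      rw [Finset.prod_ne_zero_iff]
      intro i _
      simp [ENNReal.ofReal_eq_zero, not_le, sub_pos.mpr (hmM i), hmM i]
    exact h0 (measure_mono_null hsub hdiff)
  rcases hxB with h | h
  · rw [Pi.le_def] at h; push_neg at h
    obtain ⟨i, hi⟩ := h
    -- x i < m₂ i, and m₁ i ≤ x i, so m₁ i < m₂ i
    have h1 : m₁ i < m₂ i := lt_of_le_of_lt (hx.1 i) hi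
    set c := min (M₁ i) ((m₁ i + m₂ i) / 2) with hc
    have hc1 : m₁ i < c := lt_min (hside i) (by linarith)
    have hc2 : c < m₂ i := lt_of_le_of_lt (min_le_right _ _) (by linarith)
    refine key m₁ (Function.update M₁ i c) ?_ ?_
    · intro j
      rcases eq_or_ne j i with rfl | hj
      · simpa using hc1
      · simpa [Function.update_of_ne hj] using hside j
    · intro y hy
      rw [Set.mem_Icc] at hy
      constructor
      · rw [Set.mem_Icc]
        refine ⟨hy.1, fun j => le_trans (hy.2 j) ?_⟩
        rcases eq_or_ne j i with rfl | hj
        · rw [Function.update_self]; exact min_le_left _ _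
        · simp [Function.update_of_ne hj]
      · intro hyB
        rw [Set.mem_Icc] at hyB
        have : y i ≤ c := by simpa using hy.2 i
        have := hyB.1 i
        linarith
  · rw [Pi.le_def] at h; push_neg at h
    obtain ⟨i, hi⟩ := h
    have h1 : M₂ i < M₁ i := lt_of_lt_of_le hi (hx.2 i)
    set c := max (m₁ i) ((M₂ i + M₁ i) / 2) with hc
    have hc1 : c < M₁ i := max_lt (hside i) (by linarith)
    have hc2 : M₂ i < c := lt_of_lt_of_le (by linarith) (le_max_right _ _)
    refine key (Function.update m₁ i c) M₁ ?_ ?_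
    · intro j
      rcases eq_or_ne j i with rfl | hj
      · simpa using hc1
      · simpa [Function.update_of_ne hj] using hside j
    · intro y hy
      rw [Set.mem_Icc] at hy
      constructor
      · rw [Set.mem_Icc]
        refine ⟨fun j => le_trans ?_ (hy.1 j), hy.2⟩
        rcases eq_or_ne j i with rfl | hj
        · rw [Function.update_self]; exact le_max_left _ _
        · simp [Function.update_of_ne hj]
      · intro hyB
        rw [Set.mem_Icc] at hyB
        have : c ≤ y i := by simpa using hy.1 i
        have := hyB.2 i
        linarith
end

section
/- For every real number x, the function t ↦ t · log(1 + exp(x / t)) tends to max(0, x) as t tends to 0 from the right (i.e., along the filter 𝓝[>] 0 on ℝ). -/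
/-!
Softplus is squeezed between the hinge and a constant shift of it:
`max 0 y ≤ log (1 + exp y) ≤ max 0 y + log 2`, because `exp (max 0 y) ≤ 1 + exp y ≤ 2 exp (max 0 y)`.
Rescaling by `t > 0` gives `max 0 x ≤ t log (1 + exp (x / t)) ≤ max 0 x + t log 2`,
and the gap `t log 2` vanishes as `t → 0⁺`.
-/

open Real Filter Topology

lemma max_zero_le_log_one_add_exp (y : ℝ) : max 0 y ≤ log (1 + exp y) := by
  have hpos := exp_pos y
  refine max_le (log_nonneg (by linarith)) ?_
  calc y = log (exp y) := (log_exp y).symm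
    _ ≤ log (1 + exp y) := log_le_log hpos (by linarith)

lemma log_one_add_exp_le_max_zero_add_log_two (y : ℝ) :
    log (1 + exp y) ≤ max 0 y + log 2 := by
  have hbound : 1 + exp y ≤ 2 * exp (max 0 y) := by
    have h₀ : 1 ≤ exp (max 0 y) := one_le_exp (le_max_left 0 y)
    have h₁ : exp y ≤ exp (max 0 y) := exp_le_exp.mpr (le_max_right 0 y)
    linarith
  calc log (1 + exp y) ≤ log (2 * exp (max 0 y)) := log_le_log (by positivity) hbound
    _ = max 0 y + log 2 := by rw [log_mul two_ne_zero (exp_ne_zero _), log_exp, add_comm]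

lemma mul_max_zero_div {t : ℝ} (ht : 0 < t) (x : ℝ) : t * max 0 (x / t) = max 0 x := by
  rw [mul_max_of_nonneg _ _ ht.le, mul_zero, mul_div_cancel₀ x ht.ne']

theorem stmt_10 (x : ℝ) :
    Filter.Tendsto (fun t : ℝ => t * Real.log (1 + Real.exp (x / t)))
      (nhdsWithin 0 (Set.Ioi 0)) (nhds (max 0 x)) := by
  have hgap : Tendsto (fun t : ℝ => max 0 x + t * log 2) (𝓝[>] 0) (𝓝 (max 0 x)) := by
    have := ((continuous_mul_const (log 2)).tendsto 0).const_add (max 0 x)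
    simpa using this.mono_left nhdsWithin_le_nhds
  refine tendsto_of_tendsto_of_tendsto_of_le_of_le' tendsto_const_nhds hgap ?_ ?_
  · filter_upwards [self_mem_nhdsWithin] with t (ht : 0 < t)
    rw [← mul_max_zero_div ht x]
    exact mul_le_mul_of_nonneg_left (max_zero_le_log_one_add_exp _) ht.le
  · filter_upwards [self_mem_nhdsWithin] with t (ht : 0 < t)
    rw [← mul_max_zero_div ht x, ← mul_add]
    exact mul_le_mul_of_nonneg_left (log_one_add_exp_le_max_zero_add_log_two _) ht.le
end

section
/- Let n be a natural number and let m, M ∈ ℝⁿ (viewed as Fin n → ℝ). Then the softplus volume ∏_{i=1}^{n} t · log(1 + exp((M i − m i) / t)) tends to the true volume ∏_{i=1}^{n} max(0, M i − m i) as t tends to 0 from the right (i.e., along the filter 𝓝[>] 0 on ℝ). -/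
lemma softplus_tendsto (a : ℝ) :
    Filter.Tendsto (fun t : ℝ => t * Real.log (1 + Real.exp (a / t)))
      (nhdsWithin 0 (Set.Ioi 0)) (nhds (max 0 a)) := by
  have h1 : Filter.Tendsto (fun _ : ℝ => max 0 a) (nhdsWithin 0 (Set.Ioi 0))
      (nhds (max 0 a)) := tendsto_const_nhds
  have h2 : Filter.Tendsto (fun t : ℝ => max 0 a + t * Real.log 2)
      (nhdsWithin 0 (Set.Ioi 0)) (nhds (max 0 a)) := by
    have : Filter.Tendsto (fun t : ℝ => max 0 a + t * Real.log 2)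
        (nhds 0) (nhds (max 0 a + 0 * Real.log 2)) :=
      (continuous_const.add (continuous_id.mul continuous_const)).tendsto 0
    simpa using this.mono_left nhdsWithin_le_nhds
  refine tendsto_of_tendsto_of_tendsto_of_le_of_le' h1 h2 ?_ ?_
  · filter_upwards [self_mem_nhdsWithin] with t (ht : t ∈ Set.Ioi 0)
    have ht0 : (0:ℝ) < t := ht
    have hpos : (0:ℝ) < 1 + Real.exp (a / t) := by positivity
    have hle : Real.exp (max 0 a / t) ≤ 1 + Real.exp (a / t) := by
      rcases le_total a 0 with h | h
      · rw [max_eq_left h]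
        simp only [zero_div, Real.exp_zero]
        have := (Real.exp_pos (a / t)).le
        linarith
      · rw [max_eq_right h]
        have := Real.exp_pos (a / t)
        linarith
    have hlog : max 0 a / t ≤ Real.log (1 + Real.exp (a / t)) := by
      calc max 0 a / t = Real.log (Real.exp (max 0 a / t)) := (Real.log_exp _).symm
        _ ≤ Real.log (1 + Real.exp (a / t)) := Real.log_le_log (Real.exp_pos _) hle
    calc max 0 a = t * (max 0 a / t) := by field_simp
      _ ≤ t * Real.log (1 + Real.exp (a / t)) :=
            mul_le_mul_of_nonneg_left hlog ht0.le
  · filter_upwards [self_mem_nhdsWithin] with t (ht : t ∈ Set.Ioi 0)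
    have ht0 : (0:ℝ) < t := ht
    have hle : 1 + Real.exp (a / t) ≤ 2 * Real.exp (max 0 a / t) := by
      have h1' : (1:ℝ) ≤ Real.exp (max 0 a / t) := by
        rw [Real.one_le_exp_iff]
        positivity
      have h2' : Real.exp (a / t) ≤ Real.exp (max 0 a / t) := by
        apply Real.exp_le_exp.mpr
        gcongr
        exact le_max_right 0 a
      linarith
    have hlog : Real.log (1 + Real.exp (a / t)) ≤ Real.log 2 + max 0 a / t := by
      calc Real.log (1 + Real.exp (a / t)) ≤ Real.log (2 * Real.exp (max 0 a / t)) := by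
            apply Real.log_le_log (by positivity) hle
        _ = Real.log 2 + max 0 a / t := by
            rw [Real.log_mul (by norm_num) (Real.exp_pos _).ne', Real.log_exp]
    calc t * Real.log (1 + Real.exp (a / t))
        ≤ t * (Real.log 2 + max 0 a / t) := mul_le_mul_of_nonneg_left hlog ht0.le
      _ = max 0 a + t * Real.log 2 := by field_simp; ring

theorem stmt_12 (n : ℕ) (m M : Fin n → ℝ) :
    Filter.Tendsto
      (fun t : ℝ => ∏ i : Fin n, t * Real.log (1 + Real.exp ((M i - m i) / t)))
      (nhdsWithin 0 (Set.Ioi 0))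
      (nhds (∏ i : Fin n, max 0 (M i - m i))) := by
  exact tendsto_finset_prod _ (fun i _ => softplus_tendsto (M i - m i))
end
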